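/- Lie-algebra 2-cocycle identity for the central extension of the gauge Lie algebra by closed 2-forms: for all smooth maps t₁, t₂, t₃ : E → L, one has c(⁅t₁,t₂⁆, t₃) + c(⁅t₂,t₃⁆, t₁) + c(⁅t₃,t₁⁆, t₂) = 0, and c(t₂,t₁) = −c(t₁,t₂). Consequently the bracket [(t₁,ω₁),(t₂,ω₂)] := (⁅t₁,t₂⁆, c(t₁,t₂)) on pairs (t, ω) of a smooth map t : E → L and a smooth 2-form ω on E is antisymmetric and satisfies the Jacobi identity. -/

import Mathlib

/-!
STATEMENT 10: Lie-algebra 2-cocycle identity for the central extension of the gauge Lie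
algebra by closed 2-forms: for smooth `t₁, t₂, t₃ : E → L`,
`c(⁅t₁,t₂⁆,t₃) + c(⁅t₂,t₃⁆,t₁) + c(⁅t₃,t₁⁆,t₂) = 0` and `c(t₂,t₁) = −c(t₁,t₂)`; hence the
bracket `[(t₁,ω₁),(t₂,ω₂)] = (⁅t₁,t₂⁆, c(t₁,t₂))` on pairs is antisymmetric and satisfies
the Jacobi identity.

The finite-dimensional real Lie algebra `L` is encoded as a finite-dimensional real normed
space together with a bilinear bracket `br` which is alternating and satisfies the Jacobi
identity, and an invariant symmetric bilinear form `B`.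
-/

/-- The 2-cocycle `c(t₁,t₂)(x)(v,w) = ⟨D_v t₁, D_w t₂⟩ − ⟨D_w t₁, D_v t₂⟩`. -/
noncomputable def gaugeCocycle {E L : Type*}
    [NormedAddCommGroup E] [NormedSpace ℝ E]
    [NormedAddCommGroup L] [NormedSpace ℝ L]
    (B : L →ₗ[ℝ] L →ₗ[ℝ] ℝ) (t₁ t₂ : E → L) (x v w : E) : ℝ :=
  B (fderiv ℝ t₁ x v) (fderiv ℝ t₂ x w) - B (fderiv ℝ t₁ x w) (fderiv ℝ t₂ x v)

/-- The pointwise bracket `⁅t,s⁆ : E → L` of maps `t, s : E → L`. -/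
def ptBracket {E L : Type*} [NormedAddCommGroup L] [NormedSpace ℝ L]
    (br : L →ₗ[ℝ] L →ₗ[ℝ] L) (t s : E → L) : E → L :=
  fun x => br (t x) (s x)

/-- The bracket `[(t₁,ω₁),(t₂,ω₂)] = (⁅t₁,t₂⁆, c(t₁,t₂))` on pairs of a map `E → L` and a
2-form on `E`. -/
noncomputable def pairBracket {E L : Type*}
    [NormedAddCommGroup E] [NormedSpace ℝ E]
    [NormedAddCommGroup L] [NormedSpace ℝ L]
    (br : L →ₗ[ℝ] L →ₗ[ℝ] L) (B : L →ₗ[ℝ] L →ₗ[ℝ] ℝ)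
    (p q : (E → L) × (E → E → E → ℝ)) : (E → L) × (E → E → E → ℝ) :=
  (ptBracket br p.1 q.1, gaugeCocycle B p.1 q.1)


set_option linter.unusedSectionVars false

section Aux
variable {E L : Type*} [NormedAddCommGroup E] [NormedSpace ℝ E]
    [NormedAddCommGroup L] [NormedSpace ℝ L] [FiniteDimensional ℝ L]

/-- Upgrade a bilinear map on a finite-dimensional space to a continuous one. -/
noncomputable def brCLM (br : L →ₗ[ℝ] L →ₗ[ℝ] L) : L →L[ℝ] L →L[ℝ] L :=
  LinearMap.toContinuousLinearMap
    ((LinearMap.toContinuousLinearMap : (L →ₗ[ℝ] L) ≃ₗ[ℝ] (L →L[ℝ] L)).toLinearMap ∘ₗ br)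

@[simp] lemma brCLM_apply (br : L →ₗ[ℝ] L →ₗ[ℝ] L) (x y : L) :
    brCLM br x y = br x y := by
  simp [brCLM]

/-- Product rule for the pointwise bracket. -/
lemma fderiv_ptBracket (br : L →ₗ[ℝ] L →ₗ[ℝ] L) {t s : E → L}
    (ht : ContDiff ℝ (⊤ : ℕ∞) t) (hs : ContDiff ℝ (⊤ : ℕ∞) s) (x v : E) :
    fderiv ℝ (ptBracket br t s) x v
      = br (fderiv ℝ t x v) (s x) + br (t x) (fderiv ℝ s x v) := by
  have h1 : HasFDerivAt t (fderiv ℝ t x) x :=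
    ((ht.differentiable (by simp)) x).hasFDerivAt
  have h2 : HasFDerivAt s (fderiv ℝ s x) x :=
    ((hs.differentiable (by simp)) x).hasFDerivAt
  have hc : HasFDerivAt (fun y => brCLM br (t y))
      ((brCLM br).comp (fderiv ℝ t x)) x :=
    ((brCLM br).hasFDerivAt).comp x h1
  have h := hc.clm_apply h2
  have heq : ptBracket br t s = fun y => brCLM br (t y) (s y) := by
    funext y; simp [ptBracket]
  rw [heq, h.fderiv]
  simp
  abel

/-- The purely algebraic cancellation behind the cocycle identity. -/
lemma key_alg (br : L →ₗ[ℝ] L →ₗ[ℝ] L) (B : L →ₗ[ℝ] L →ₗ[ℝ] ℝ)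
    (Bsymm : ∀ x y : L, B x y = B y x)
    (Binv : ∀ x y z : L, B (br x y) z = B x (br y z))
    (u₁ u₂ u₃ a₁ a₂ a₃ b₁ b₂ b₃ : L) :
    (B (br a₁ u₂ + br u₁ a₂) b₃ - B (br b₁ u₂ + br u₁ b₂) a₃)
      + (B (br a₂ u₃ + br u₂ a₃) b₁ - B (br b₂ u₃ + br u₂ b₃) a₁)
      + (B (br a₃ u₁ + br u₃ a₁) b₂ - B (br b₃ u₁ + br u₃ b₁) a₂) = 0 := by
  have cyc : ∀ x y z : L, B (br x y) z = B (br y z) x := fun x y z => by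
    rw [Binv, Bsymm]
  simp only [map_add, LinearMap.add_apply]
  linear_combination cyc a₁ u₂ b₃ - cyc b₃ u₁ a₂ - cyc b₁ u₂ a₃ + cyc a₃ u₁ b₂
    + cyc a₂ u₃ b₁ - cyc b₂ u₃ a₁

end Aux
theorem gaugeCocycle_identities
    {E L : Type*} [NormedAddCommGroup E] [NormedSpace ℝ E]
    [NormedAddCommGroup L] [NormedSpace ℝ L] [FiniteDimensional ℝ L]
    (br : L →ₗ[ℝ] L →ₗ[ℝ] L)
    (br_alt : ∀ x : L, br x x = 0)
    (br_jacobi : ∀ x y z : L, br (br x y) z + br (br y z) x + br (br z x) y = 0)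
    (B : L →ₗ[ℝ] L →ₗ[ℝ] ℝ)
    (Bsymm : ∀ x y : L, B x y = B y x)
    (Binv : ∀ x y z : L, B (br x y) z = B x (br y z)) :
    -- the 2-cocycle identity
    (∀ t₁ t₂ t₃ : E → L, ContDiff ℝ (⊤ : ℕ∞) t₁ → ContDiff ℝ (⊤ : ℕ∞) t₂ → ContDiff ℝ (⊤ : ℕ∞) t₃ →
      ∀ x v w : E,
        gaugeCocycle B (ptBracket br t₁ t₂) t₃ x v w
          + gaugeCocycle B (ptBracket br t₂ t₃) t₁ x v w
          + gaugeCocycle B (ptBracket br t₃ t₁) t₂ x v w = 0) ∧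
    -- antisymmetry of the cocycle
    (∀ t₁ t₂ : E → L, ContDiff ℝ (⊤ : ℕ∞) t₁ → ContDiff ℝ (⊤ : ℕ∞) t₂ →
      ∀ x v w : E, gaugeCocycle B t₂ t₁ x v w = - gaugeCocycle B t₁ t₂ x v w) ∧
    -- consequently the bracket on pairs is antisymmetric …
    (∀ p q : (E → L) × (E → E → E → ℝ), ContDiff ℝ (⊤ : ℕ∞) p.1 → ContDiff ℝ (⊤ : ℕ∞) q.1 →
      pairBracket br B p q = - pairBracket br B q p) ∧
    -- … and satisfies the Jacobi identity
    (∀ p q r : (E → L) × (E → E → E → ℝ),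
      ContDiff ℝ (⊤ : ℕ∞) p.1 → ContDiff ℝ (⊤ : ℕ∞) q.1 → ContDiff ℝ (⊤ : ℕ∞) r.1 →
        pairBracket br B (pairBracket br B p q) r
          + pairBracket br B (pairBracket br B q r) p
          + pairBracket br B (pairBracket br B r p) q = 0) := by
  have hcoc : ∀ t₁ t₂ t₃ : E → L, ContDiff ℝ (⊤ : ℕ∞) t₁ → ContDiff ℝ (⊤ : ℕ∞) t₂ → ContDiff ℝ (⊤ : ℕ∞) t₃ →
      ∀ x v w : E,
        gaugeCocycle B (ptBracket br t₁ t₂) t₃ x v w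
          + gaugeCocycle B (ptBracket br t₂ t₃) t₁ x v w
          + gaugeCocycle B (ptBracket br t₃ t₁) t₂ x v w = 0 := by
    intro t₁ t₂ t₃ h1 h2 h3 x v w
    simp only [gaugeCocycle, fderiv_ptBracket br h1 h2, fderiv_ptBracket br h2 h3,
      fderiv_ptBracket br h3 h1]
    exact key_alg br B Bsymm Binv (t₁ x) (t₂ x) (t₃ x)
      (fderiv ℝ t₁ x v) (fderiv ℝ t₂ x v) (fderiv ℝ t₃ x v)
      (fderiv ℝ t₁ x w) (fderiv ℝ t₂ x w) (fderiv ℝ t₃ x w)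
  have hanti : ∀ t₁ t₂ : E → L,
      ∀ x v w : E, gaugeCocycle B t₂ t₁ x v w = - gaugeCocycle B t₁ t₂ x v w := by
    intro t₁ t₂ x v w
    simp only [gaugeCocycle]
    rw [Bsymm (fderiv ℝ t₂ x v), Bsymm (fderiv ℝ t₂ x w)]
    ring
  have br_anti : ∀ x y : L, br x y = - br y x := by
    intro x y
    have h := br_alt (x + y)
    simp only [map_add, LinearMap.add_apply, br_alt, zero_add, add_zero] at h
    exact eq_neg_of_add_eq_zero_right h
  refine ⟨hcoc, fun t₁ t₂ _ _ => hanti t₁ t₂, ?_, ?_⟩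
  · intro p q hp hq
    refine Prod.ext ?_ ?_
    · funext y
      simp only [pairBracket, ptBracket, Prod.fst_neg, Pi.neg_apply]
      exact br_anti _ _
    · funext y v w
      simp only [pairBracket, Prod.snd_neg, Pi.neg_apply]
      exact hanti q.1 p.1 y v w
  · intro p q r hp hq hr
    refine Prod.ext ?_ ?_
    · funext y
      simp only [pairBracket, ptBracket, Prod.fst_add, Pi.add_apply, Prod.fst_zero,
        Pi.zero_apply]
      exact br_jacobi _ _ _
    · funext y v w
      simp only [pairBracket, Prod.snd_add, Pi.add_apply, Prod.snd_zero, Pi.zero_apply]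
      exact hcoc p.1 q.1 r.1 hp hq hr y v w
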